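/- arXiv:2005.08425 — 5 statements merged into one kernel-verified Lean document; each statement's English description precedes it below -/
import Mathlib

section
/- Let U = (u_i^α) be a real orthogonal N×N matrix and let v_1,…,v_n ∈ ℝ^N be unit vectors. Then the sum over all configurations x ∈ Λ^n (tuples in [N]^n with every particle number even) of (∏_{i=1}^N n_i(x)!!) · |∏_{a=1}^n ⟨v_a, u_{x_a}⟩| / (∏_{i=1}^N n_i(x)!!) weighted appropriately, namely Σ_{x ∈ Λ^n} (∏_i n_i(x)!!) · |P(x,U,V)| where P(x,U,V) = (∏_a Σ_α v_a^α u_{x_a}^α)/(∏_i n_i(x)!!), is at most n!!, the number of perfect matchings of [n]. -/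
open Finset

noncomputable section
open scoped Classical

/-- particle number of configuration `x` at site `i` -/
def pnum {N n : ℕ} (x : Fin n → Fin N) (i : Fin N) : ℕ :=
  (Finset.univ.filter fun a => x a = i).card

/-- the paper's double factorial: `k!!` is the standard double factorial of `k - 1`,
with `0!! = 1`. -/
def dfact (k : ℕ) : ℕ := Nat.doubleFactorial (k - 1)

/-! Expanding `∏ₐ |⟨v_a, u_{x_a}⟩|` over even configurations, the particle at position `0`
shares its site with some partner `b`. Summing over the common site first, the pair contributes
`Σ_i |⟨v_0, u_i⟩| |⟨v_b, u_i⟩| ≤ 1` (Cauchy–Schwarz and Parseval for the orthonormal columns of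
`U`), and the remaining `n - 2` particles again form an even configuration. Bounding the sum by a
union over the `n - 1` possible partners gives the recursion `n!! = (n - 1) (n - 2)!!`. -/

lemma sum_le_sum_sum_filter {ι κ R : Type*} [Fintype κ] [AddCommMonoid R] [PartialOrder R]
    [IsOrderedAddMonoid R] {s : Finset ι} {f : ι → R} (p : κ → ι → Prop)
    [∀ k, DecidablePred (p k)] (hf : ∀ x ∈ s, 0 ≤ f x) (hp : ∀ x ∈ s, ∃ k, p k x) :
    ∑ x ∈ s, f x ≤ ∑ k, ∑ x ∈ s.filter (p k), f x := by
  simp_rw [sum_filter]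
  rw [sum_comm]
  refine sum_le_sum fun x hx => ?_
  obtain ⟨k, hk⟩ := hp x hx
  calc f x = if p k x then f x else 0 := (if_pos hk).symm
    _ ≤ ∑ k, if p k x then f x else 0 :=
      single_le_sum (f := fun k => if p k x then f x else 0)
        (fun k _ => by split_ifs <;> simp [hf x hx]) (mem_univ k)

lemma sum_eq_sum_cons_insertNth {α M : Type*} [Fintype α] [AddCommMonoid M] {n : ℕ}
    (b : Fin (n + 1)) (f : (Fin (n + 2) → α) → M) :
    ∑ x, f x = ∑ q, ∑ p, ∑ y, f (Fin.cons q (b.insertNth p y)) := by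
  rw [← (Fin.consEquiv fun _ => α).sum_comp, Fintype.sum_prod_type]
  refine Fintype.sum_congr _ _ fun q => ?_
  rw [← (Fin.insertNthEquiv (fun _ => α) b).sum_comp, Fintype.sum_prod_type]
  rfl

lemma dotProduct_vecMul_self_of_mul_transpose_eq_one {ι R : Type*} [Fintype ι] [DecidableEq ι]
    [CommRing R] {U : Matrix ι ι R} (hU : U * U.transpose = 1) (v : ι → R) :
    Matrix.vecMul v U ⬝ᵥ Matrix.vecMul v U = v ⬝ᵥ v := by
  rw [← Matrix.dotProduct_mulVec, ← Matrix.vecMul_transpose, Matrix.vecMul_vecMul, hU,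
    Matrix.vecMul_one]

lemma sum_abs_mul_abs_le_one {ι : Type*} [Fintype ι] {f g : ι → ℝ} (hf : ∑ i, f i ^ 2 = 1)
    (hg : ∑ i, g i ^ 2 = 1) : ∑ i, |f i| * |g i| ≤ 1 := by
  simpa [hf, hg] using Real.sum_mul_le_sqrt_mul_sqrt univ (fun i => |f i|) fun i => |g i|

lemma dfact_add_two (n : ℕ) : dfact (n + 2) = (n + 1) * dfact n := by
  cases n with
  | zero => rfl
  | succ m => exact Nat.doubleFactorial_add_two m

lemma pnum_eq_ite_add_pnum_succAbove {N n : ℕ} (x : Fin (n + 1) → Fin N) (b : Fin (n + 1))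
    (j : Fin N) : pnum x j = (if x b = j then 1 else 0) + pnum (fun a => x (b.succAbove a)) j := by
  simp only [pnum, card_filter]
  exact Fin.sum_univ_succAbove _ b

lemma even_pnum_cons_insertNth_self_iff {N n : ℕ} (q : Fin N) (y : Fin n → Fin N)
    (b : Fin (n + 1)) (j : Fin N) :
    Even (pnum (Fin.cons q (b.insertNth q y) : Fin (n + 2) → Fin N) j) ↔ Even (pnum y j) := by
  rw [pnum_eq_ite_add_pnum_succAbove _ 0, pnum_eq_ite_add_pnum_succAbove _ b]
  simp only [Fin.cons_zero, Fin.succAbove_zero, Fin.cons_succ, Fin.insertNth_apply_same,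
    Fin.insertNth_apply_succAbove]
  split_ifs <;> simp [← add_assoc, Nat.even_add]

/-- The paper's `Λ^n`. -/
def evenConfigs (N n : ℕ) : Finset (Fin n → Fin N) :=
  univ.filter fun x => ∀ i, Even (pnum x i)

lemma exists_succ_eq_zero_of_mem_evenConfigs {N n : ℕ} {x : Fin (n + 1) → Fin N}
    (hx : x ∈ evenConfigs N (n + 1)) : ∃ b : Fin n, x b.succ = x 0 := by
  have heven := (mem_filter.mp hx).2 (x 0)
  rw [pnum_eq_ite_add_pnum_succAbove x 0, if_pos rfl] at heven
  have hpos : 0 < pnum (fun a => x (Fin.succ a)) (x 0) := by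
    by_contra! h
    simp_all
  obtain ⟨b, hb⟩ := card_pos.mp hpos
  exact ⟨b, (mem_filter.mp hb).2⟩

lemma sum_evenConfigs_filter_succ_eq_zero {N n : ℕ} (c : Fin (n + 2) → Fin N → ℝ)
    (b : Fin (n + 1)) :
    ∑ x ∈ (evenConfigs N (n + 2)).filter (fun x => x b.succ = x 0), ∏ a, c a (x a)
      = (∑ i, c 0 i * c b.succ i)
        * ∑ y ∈ evenConfigs N n, ∏ a, c (b.succAbove a).succ (y a) := by
  rw [evenConfigs, evenConfigs, filter_filter, sum_filter, sum_filter, sum_mul,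
    sum_eq_sum_cons_insertNth b]
  refine Fintype.sum_congr _ _ fun q => ?_
  rw [sum_eq_single q, mul_sum]
  · refine Fintype.sum_congr _ _ fun y => ?_
    simp [even_pnum_cons_insertNth_self_iff, Fin.prod_univ_succ, Fin.prod_univ_succAbove _ b,
      mul_assoc]
  · intro p _ hpq
    simp [hpq]
  · simp

theorem sum_evenConfigs_prod_le_dfact {N n : ℕ} (c : Fin n → Fin N → ℝ)
    (hc : ∀ a i, 0 ≤ c a i) (hpair : ∀ a b, a ≠ b → ∑ i, c a i * c b i ≤ 1) :
    ∑ x ∈ evenConfigs N n, ∏ a, c a (x a) ≤ dfact n := by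
  induction n using Nat.twoStepInduction with
  | zero => simp [evenConfigs, pnum, dfact]
  | one =>
    rw [sum_eq_zero fun x hx =>
      (exists_succ_eq_zero_of_mem_evenConfigs hx).elim fun b _ => b.elim0]
    positivity
  | more n ih _ =>
    calc ∑ x ∈ evenConfigs N (n + 2), ∏ a, c a (x a)
        ≤ ∑ b : Fin (n + 1), ∑ x ∈ (evenConfigs N (n + 2)).filter (fun x => x b.succ = x 0),
            ∏ a, c a (x a) := by
          apply sum_le_sum_sum_filter
          · exact fun x _ => prod_nonneg fun a _ => hc a (x a)
          · exact fun x hx => exists_succ_eq_zero_of_mem_evenConfigs hx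
      _ ≤ ∑ _b : Fin (n + 1), 1 * (dfact n : ℝ) := by
          refine sum_le_sum fun b _ => ?_
          rw [sum_evenConfigs_filter_succ_eq_zero]
          refine mul_le_mul (hpair 0 b.succ (Fin.succ_ne_zero b).symm) ?_
            (sum_nonneg fun y _ => prod_nonneg fun a _ => hc _ _) zero_le_one
          exact ih _ (fun a i => hc _ i) fun a a' h =>
            hpair _ _ ((Fin.succ_injective _).ne (Fin.succAbove_right_injective.ne h))
      _ = dfact (n + 2) := by simp [dfact_add_two]

theorem stmt_2_general (N n : ℕ) (U : Matrix (Fin N) (Fin N) ℝ)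
    (hU : U * U.transpose = 1)
    (v : Fin n → Fin N → ℝ) (hv : ∀ a, ∑ α, (v a α) ^ 2 = 1) :
    ∑ x ∈ Finset.univ.filter (fun x : Fin n → Fin N => ∀ i, Even (pnum x i)),
        (∏ i, (dfact (pnum x i) : ℝ)) *
          |(∏ a, ∑ α, v a α * U α (x a)) / ∏ i, (dfact (pnum x i) : ℝ)|
      ≤ (dfact n : ℝ) := by
  have hcoeff_sq : ∀ a, ∑ i, (∑ α, v a α * U α i) ^ 2 = 1 := fun a => by
    rw [← hv a]
    simpa [dotProduct, Matrix.vecMul, sq] using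
      dotProduct_vecMul_self_of_mul_transpose_eq_one hU (v a)
  calc _ = ∑ x ∈ evenConfigs N n, ∏ a, |∑ α, v a α * U α (x a)| := by
        refine sum_congr rfl fun x _ => ?_
        have hD : (0 : ℝ) < ∏ i, (dfact (pnum x i) : ℝ) :=
          prod_pos fun i _ => mod_cast Nat.doubleFactorial_pos _
        rw [abs_div, abs_of_pos hD, mul_div_cancel₀ _ hD.ne', abs_prod]
    _ ≤ dfact n := sum_evenConfigs_prod_le_dfact _ (fun _ _ => abs_nonneg _)
        fun a b _ => sum_abs_mul_abs_le_one (hcoeff_sq a) (hcoeff_sq b)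

/-- for a real orthogonal matrix `U` and unit vectors `v_1,…,v_n`,
`Σ_{x ∈ Λ^n} (∏_i n_i(x)!!) · |P(x,U,V)| ≤ n!!` where
`P(x,U,V) = (∏_a Σ_α v_a^α u_{x_a}^α) / (∏_i n_i(x)!!)`. -/
theorem stmt_2 (N n : ℕ) (hn : Even n) (U : Matrix (Fin N) (Fin N) ℝ)
    (hU : U * U.transpose = 1)
    (v : Fin n → Fin N → ℝ) (hv : ∀ a, ∑ α, (v a α) ^ 2 = 1) :
    ∑ x ∈ Finset.univ.filter (fun x : Fin n → Fin N => ∀ i, Even (pnum x i)),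
        (∏ i, (dfact (pnum x i) : ℝ)) *
          |(∏ a, ∑ α, v a α * U α (x a)) / ∏ i, (dfact (pnum x i) : ℝ)|
      ≤ (dfact n : ℝ) :=
  stmt_2_general N n U hU v hv

end
end

section
/- Let L be the operator on functions f : ℤ^n → ℝ defined by (Lf)(x) = Σ_{a=1}^n Σ_{k ∈ ℤ, k≠0} (f(x + k e_a) − f(x))/k², restricted to a box B = [ℓ]^n. Then for every f : B → ℝ, Σ_{x ∈ B} (f(x) − ℓ^{−n} Σ_{y ∈ B} f(y))² ≤ ℓ · Σ_{x ∈ B} Σ_{a=1}^n Σ_{k : x + k e_a ∈ B, k ≠ 0} (f(x + k e_a) − f(x))²/k². -/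
/-!
Efron–Stein tensorization. Let `P_s` average over the coordinates in `s` (uniform measure on
the box). Each `P_s` is an orthogonal projection, `P_s ∘ P_a = P_{insert a s}`, and
`f - P_{insert a s} f = (f - P_s f) + P_s (f - P_a f)` is an orthogonal decomposition with
`‖P_s (f - P_a f)‖ ≤ ‖f - P_a f‖`. By induction on `s`, the variance `‖f - P_univ f‖²` is at
most `∑_a ‖f - P_a f‖²`. Along each line in direction `e_a`, Jensen bounds
`(f x - P_a f x)²` by `ℓ⁻¹ ∑_t (f (x + (t - x_a) e_a) - f x)²`, and `1 ≤ ℓ² / k²` for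
`0 < |k| < ℓ` produces the Cauchy weights.
-/

open Finset Fintype Function

open scoped BigOperators

namespace BoxPoincare

variable {ι α : Type*} [Fintype ι] [DecidableEq ι] {S : Finset α}

/-- The conditional expectation of `f`, for the uniform measure on `S^ι`, given the coordinates
outside `s`. -/
noncomputable def condAvg (S : Finset α) (s : Finset ι) (f : (ι → α) → ℝ) (x : ι → α) : ℝ :=
  𝔼 y ∈ piFinset fun _ : ι ↦ S, f (s.piecewise y x)

lemma sq_expect_le_expect_sq {β : Type*} {t : Finset β} (ht : t.Nonempty) (g : β → ℝ) :
    (𝔼 i ∈ t, g i) ^ 2 ≤ 𝔼 i ∈ t, g i ^ 2 := by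
  simpa [Finset.expect_const ht] using expect_mul_sq_le_sq_mul_sq t g fun _ ↦ 1

lemma piecewise_mem_piFinset (s : Finset ι) {x y : ι → α} (hx : x ∈ piFinset fun _ : ι ↦ S)
    (hy : y ∈ piFinset fun _ : ι ↦ S) : s.piecewise y x ∈ piFinset fun _ : ι ↦ S := by
  rw [← mem_coe, coe_piFinset] at *
  exact s.piecewise_mem_set_pi hy hx

/-- Exchanging the `s`-coordinates of `x` and `y` is an involution of `S^ι × S^ι`. -/
lemma expect_expect_piecewise_swap (s : Finset ι) (F : (ι → α) → (ι → α) → ℝ) :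
    𝔼 x ∈ piFinset (fun _ : ι ↦ S), 𝔼 y ∈ piFinset (fun _ : ι ↦ S),
        F (s.piecewise y x) (s.piecewise x y) =
      𝔼 x ∈ piFinset (fun _ : ι ↦ S), 𝔼 y ∈ piFinset (fun _ : ι ↦ S), F x y := by
  have swap_swap (p : (ι → α) × (ι → α)) :
      (s.piecewise (s.piecewise p.1 p.2) (s.piecewise p.2 p.1),
        s.piecewise (s.piecewise p.2 p.1) (s.piecewise p.1 p.2)) = p := by
    simp [piecewise_same]
  rw [← expect_product', ← expect_product']
  refine expect_nbij' (fun p ↦ (s.piecewise p.2 p.1, s.piecewise p.1 p.2))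
    (fun p ↦ (s.piecewise p.2 p.1, s.piecewise p.1 p.2)) ?_ ?_ (fun p _ ↦ swap_swap p)
    (fun p _ ↦ swap_swap p) fun _ _ ↦ rfl <;>
  · rintro ⟨x, y⟩ hxy
    rw [mem_product] at hxy ⊢
    exact ⟨piecewise_mem_piFinset s hxy.1 hxy.2, piecewise_mem_piFinset s hxy.2 hxy.1⟩

lemma condAvg_sub (s : Finset ι) (f g : (ι → α) → ℝ) :
    condAvg S s (f - g) = condAvg S s f - condAvg S s g := by
  ext x
  simp [condAvg, expect_sub_distrib]

lemma expect_condAvg_mul (s : Finset ι) (f g : (ι → α) → ℝ) :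
    𝔼 x ∈ piFinset (fun _ : ι ↦ S), condAvg S s f x * g x =
      𝔼 x ∈ piFinset (fun _ : ι ↦ S), f x * condAvg S s g x := by
  simp only [condAvg, expect_mul, mul_expect]
  simpa [piecewise_same] using
    expect_expect_piecewise_swap (S := S) s fun u v ↦ f u * g (s.piecewise v u)

section Nonempty

variable (hS : S.Nonempty)
include hS

lemma expect_expect_piecewise (s : Finset ι) (g : (ι → α) → ℝ) :
    𝔼 x ∈ piFinset (fun _ : ι ↦ S), 𝔼 y ∈ piFinset (fun _ : ι ↦ S), g (s.piecewise y x) =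
      𝔼 x ∈ piFinset (fun _ : ι ↦ S), g x := by
  rw [expect_expect_piecewise_swap s fun u _ ↦ g u]
  exact expect_congr rfl fun x _ ↦ Finset.expect_const (piFinset_nonempty.2 fun _ ↦ hS) _

lemma condAvg_empty (f : (ι → α) → ℝ) : condAvg S ∅ f = f := by
  ext x
  simp [condAvg, Finset.expect_const (piFinset_nonempty.2 fun _ ↦ hS)]

lemma condAvg_condAvg (s : Finset ι) (f : (ι → α) → ℝ) :
    condAvg S s (condAvg S s f) = condAvg S s f := by
  ext x
  simp [condAvg, Finset.expect_const (piFinset_nonempty.2 fun _ ↦ hS)]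

lemma condAvg_condAvg_singleton (s : Finset ι) (a : ι) (f : (ι → α) → ℝ) :
    condAvg S s (condAvg S {a} f) = condAvg S (insert a s) f := by
  ext x
  have merge (y w : ι → α) : ({a} : Finset ι).piecewise w (s.piecewise y x) =
      (insert a s).piecewise (({a} : Finset ι).piecewise w y) x := by
    ext b
    by_cases hb : b = a
    · subst hb; simp
    · by_cases hbs : b ∈ s <;> simp [Finset.piecewise, hb, hbs]
  simp only [condAvg, merge]
  exact expect_expect_piecewise hS {a} (fun z ↦ f ((insert a s).piecewise z x))

lemma expect_sq_condAvg_le (s : Finset ι) (f : (ι → α) → ℝ) :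
    𝔼 x ∈ piFinset (fun _ : ι ↦ S), condAvg S s f x ^ 2 ≤
      𝔼 x ∈ piFinset (fun _ : ι ↦ S), f x ^ 2 :=
  calc 𝔼 x ∈ piFinset (fun _ : ι ↦ S), condAvg S s f x ^ 2
      ≤ 𝔼 x ∈ piFinset (fun _ : ι ↦ S), condAvg S s (f ^ 2) x :=
        expect_le_expect fun _ _ ↦ sq_expect_le_expect_sq (piFinset_nonempty.2 fun _ ↦ hS) _
    _ = _ := expect_expect_piecewise hS s _

lemma expect_sub_condAvg_mul_condAvg (s : Finset ι) (f g : (ι → α) → ℝ) :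
    𝔼 x ∈ piFinset (fun _ : ι ↦ S), (f x - condAvg S s f x) * condAvg S s g x = 0 := by
  have h := expect_condAvg_mul (S := S) s (f - condAvg S s f) g
  rw [condAvg_sub, condAvg_condAvg hS, sub_self] at h
  simpa using h.symm

theorem expect_sq_sub_condAvg_le_sum (s : Finset ι) (f : (ι → α) → ℝ) :
    𝔼 x ∈ piFinset (fun _ : ι ↦ S), (f x - condAvg S s f x) ^ 2 ≤
      ∑ a ∈ s, 𝔼 x ∈ piFinset (fun _ : ι ↦ S), (f x - condAvg S {a} f x) ^ 2 := by
  induction s using Finset.induction_on with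
  | empty => simp [condAvg_empty hS]
  | @insert a s ha ih =>
    set h := f - condAvg S {a} f
    have split (x : ι → α) : (f x - condAvg S (insert a s) f x) ^ 2 =
        (f x - condAvg S s f x) ^ 2 + 2 * ((f x - condAvg S s f x) * condAvg S s h x) +
          condAvg S s h x ^ 2 := by
      rw [← condAvg_condAvg_singleton hS, show condAvg S s h x =
        condAvg S s f x - condAvg S s (condAvg S {a} f) x from congrFun (condAvg_sub ..) x]
      ring
    calc 𝔼 x ∈ piFinset (fun _ : ι ↦ S), (f x - condAvg S (insert a s) f x) ^ 2
        = 𝔼 x ∈ piFinset (fun _ : ι ↦ S), (f x - condAvg S s f x) ^ 2 +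
            𝔼 x ∈ piFinset (fun _ : ι ↦ S), condAvg S s h x ^ 2 := by
          simp only [split, expect_add_distrib, ← mul_expect,
            expect_sub_condAvg_mul_condAvg hS, mul_zero, add_zero]
      _ ≤ (∑ b ∈ s, 𝔼 x ∈ piFinset (fun _ : ι ↦ S), (f x - condAvg S {b} f x) ^ 2) +
            𝔼 x ∈ piFinset (fun _ : ι ↦ S), h x ^ 2 :=
          add_le_add ih (expect_sq_condAvg_le hS s h)
      _ = _ := by rw [sum_insert ha, add_comm]; rfl

lemma expect_piFinset_apply (a : ι) (g : α → ℝ) :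
    𝔼 y ∈ piFinset (fun _ : ι ↦ S), g (y a) = 𝔼 t ∈ S, g t := by
  obtain ⟨m, hm⟩ := Nat.exists_eq_add_one_of_ne_zero (card_pos_iff.2 ⟨a⟩).ne'
  rw [Finset.expect_eq_sum_div_card, Finset.expect_eq_sum_div_card, sum_piFinset_apply,
    card_piFinset, hm, Finset.prod_const, card_univ, hm, nsmul_eq_mul, Nat.add_sub_cancel,
    pow_succ, Nat.cast_mul, mul_div_mul_left _ _ (by exact_mod_cast (pow_pos hS.card_pos m).ne')]

lemma sq_sub_condAvg_singleton_le (a : ι) (f : (ι → α) → ℝ) (x : ι → α) :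
    (f x - condAvg S {a} f x) ^ 2 ≤ 𝔼 t ∈ S, (f (update x a t) - f x) ^ 2 := by
  have h : f x - condAvg S {a} f x = 𝔼 t ∈ S, (f x - f (update x a t)) := by
    rw [expect_sub_distrib, Finset.expect_const hS, condAvg]
    simp only [piecewise_singleton]
    rw [expect_piFinset_apply hS a fun t ↦ f (update x a t)]
  rw [h]
  refine (sq_expect_le_expect_sq hS _).trans_eq (expect_congr rfl fun t _ ↦ ?_)
  ring

theorem expect_sq_sub_expect_le (f : (ι → α) → ℝ) :
    𝔼 x ∈ piFinset (fun _ : ι ↦ S), (f x - 𝔼 y ∈ piFinset (fun _ : ι ↦ S), f y) ^ 2 ≤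
      𝔼 x ∈ piFinset (fun _ : ι ↦ S), ∑ a, 𝔼 t ∈ S, (f (update x a t) - f x) ^ 2 := by
  have h := expect_sq_sub_condAvg_le_sum hS univ f
  simp only [condAvg, piecewise_univ] at h
  refine h.trans ?_
  rw [expect_sum_comm]
  exact sum_le_sum fun a _ ↦ expect_le_expect fun x _ ↦ sq_sub_condAvg_singleton_le hS a f x

end Nonempty

lemma le_sq_mul_div_sq {d k L : ℝ} (hd : 0 ≤ d) (hk : k ≠ 0) (hkL : k ^ 2 ≤ L ^ 2) :
    d ≤ L ^ 2 * (d / k ^ 2) :=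
  calc d = k ^ 2 * (d / k ^ 2) := by field_simp
    _ ≤ L ^ 2 * (d / k ^ 2) := by gcongr

lemma expect_Icc_sq_sub_le (ℓ : ℕ) (g : ℤ → ℝ) {s : ℤ} (hs : s ∈ Icc 1 (ℓ : ℤ)) :
    𝔼 t ∈ Icc 1 (ℓ : ℤ), (g t - g s) ^ 2 ≤
      ℓ * ∑ k ∈ (Icc (1 - s) (ℓ - s)).erase 0, (g (s + k) - g s) ^ 2 / (k : ℝ) ^ 2 := by
  rw [mem_Icc] at hs
  have shift : Icc 1 (ℓ : ℤ) = (Icc (1 - s) (ℓ - s)).map (addLeftEmbedding s) := by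
    rw [map_add_left_Icc, add_sub_cancel, add_sub_cancel]
  have hℓ : (0 : ℝ) < ℓ := by exact_mod_cast (show (0 : ℤ) < ℓ by omega)
  rw [Finset.expect_eq_sum_div_card, Int.card_Icc, add_sub_cancel_right, Int.toNat_natCast, shift,
    sum_map, ← sum_erase _ (a := 0) (by simp), div_le_iff₀ hℓ, mul_right_comm, ← sq, mul_sum]
  refine sum_le_sum fun k hk ↦ ?_
  obtain ⟨hk0, hk⟩ := mem_erase.1 hk
  rw [mem_Icc] at hk
  refine le_sq_mul_div_sq (sq_nonneg _) (by exact_mod_cast hk0) ?_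
  exact_mod_cast (sq_le_sq' (by omega) (by omega) : k ^ 2 ≤ (ℓ : ℤ) ^ 2)

end BoxPoincare

/-- Poincaré inequality for the Cauchy-increment random walk on the
box `B = [ℓ]^n ⊂ ℤ^n`: the variance of `f` over `B` is at most `ℓ` times the
Dirichlet form of `f` over `B`. -/
theorem stmt_6 (n ℓ : ℕ) (hℓ : 0 < ℓ) (f : (Fin n → ℤ) → ℝ) :
    ∑ x ∈ Fintype.piFinset (fun _ : Fin n => Finset.Icc (1 : ℤ) (ℓ : ℤ)),
        (f x - ((ℓ : ℝ) ^ n)⁻¹ *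
            ∑ y ∈ Fintype.piFinset (fun _ : Fin n => Finset.Icc (1 : ℤ) (ℓ : ℤ)), f y) ^ 2
      ≤ (ℓ : ℝ) *
        ∑ x ∈ Fintype.piFinset (fun _ : Fin n => Finset.Icc (1 : ℤ) (ℓ : ℤ)),
          ∑ a : Fin n, ∑ k ∈ (Finset.Icc (1 - x a) ((ℓ : ℤ) - x a)).erase 0,
            (f (Function.update x a (x a + k)) - f x) ^ 2 / (k : ℝ) ^ 2 := by
  set B := Fintype.piFinset fun _ : Fin n => Finset.Icc (1 : ℤ) (ℓ : ℤ)
  have hB : (#B : ℝ) = (ℓ : ℝ) ^ n := by simp [B]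
  have line (x) (hx : x ∈ B) (a : Fin n) :
      𝔼 t ∈ Icc (1 : ℤ) ℓ, (f (update x a t) - f x) ^ 2 ≤
        ℓ * ∑ k ∈ (Icc (1 - x a) ((ℓ : ℤ) - x a)).erase 0,
          (f (update x a (x a + k)) - f x) ^ 2 / (k : ℝ) ^ 2 := by
    simpa using BoxPoincare.expect_Icc_sq_sub_le ℓ (fun t ↦ f (update x a t)) (mem_piFinset.1 hx a)
  calc ∑ x ∈ B, (f x - ((ℓ : ℝ) ^ n)⁻¹ * ∑ y ∈ B, f y) ^ 2
      = #B * 𝔼 x ∈ B, (f x - 𝔼 y ∈ B, f y) ^ 2 := by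
        rw [Finset.card_mul_expect, Finset.expect_eq_sum_div_card B f, hB, inv_mul_eq_div]
    _ ≤ #B * 𝔼 x ∈ B, ∑ a, 𝔼 t ∈ Icc (1 : ℤ) ℓ, (f (update x a t) - f x) ^ 2 := by
        gcongr ?_ * ?_
        exact BoxPoincare.expect_sq_sub_expect_le (nonempty_Icc.2 (by omega)) f
    _ ≤ #B * 𝔼 x ∈ B, ℓ * ∑ a, ∑ k ∈ (Icc (1 - x a) ((ℓ : ℤ) - x a)).erase 0,
          (f (update x a (x a + k)) - f x) ^ 2 / (k : ℝ) ^ 2 := by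
        gcongr with x hx
        rw [mul_sum]
        exact sum_le_sum fun a _ ↦ line x hx a
    _ = _ := by rw [← mul_expect, mul_left_comm, Finset.card_mul_expect]
end

section
/- Suppose D : X → ℝ≥0 and a nonnegative function u : [0,∞) → ℝ≥0 is differentiable with u(0) ≥ 0 and u'(t) ≥ 1 for all t > 0. Then u(t) ≥ t for all t ≥ 0. Consequently, if f ∈ L¹ with ‖f‖₁ = 1, f ≥ 0, and the function u_t = ‖e^{tL} f‖₂^{−2/n} satisfies u_t' ≥ 1 (which holds when the Nash inequality ‖g‖₂^{2+2/n} ≤ E(g)·‖g‖₁^{2/n} holds and e^{tL} preserves L¹ norms of positive functions, where E(g) = ⟨g, (−L)g⟩ and ∂_t ‖e^{tL}f‖₂² = −2E(e^{tL}f)), then ‖e^{tL} f‖₂ ≤ t^{−n/2} for all t > 0. -/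
/-- if `u` is nonnegative-at-`0`, continuous on `[0,∞)` and differentiable
on `(0,∞)` with `u' ≥ 1` there, then `u(t) ≥ t` for `t ≥ 0`; consequently, if
`u t = F t ^ (−2/n)` where `F t = ‖e^{tL} f‖₂ > 0`, then `F t ≤ t^{−n/2}` for `t > 0`. -/
theorem stmt_7 (n : ℕ) (hn : 0 < n) (u F u' : ℝ → ℝ)
    (hcont : ContinuousOn u (Set.Ici 0))
    (hderiv : ∀ t > (0 : ℝ), HasDerivAt u (u' t) t)
    (hu' : ∀ t > (0 : ℝ), 1 ≤ u' t)
    (hu0 : 0 ≤ u 0)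
    (hF : ∀ t : ℝ, 0 < F t)
    (hrel : ∀ t : ℝ, u t = F t ^ (-(2 : ℝ) / (n : ℝ))) :
    (∀ t ≥ (0 : ℝ), t ≤ u t) ∧ (∀ t > (0 : ℝ), F t ≤ t ^ (-(n : ℝ) / 2)) := by
  have hmono : MonotoneOn (fun t => u t - t) (Set.Ici 0) := by
    apply monotoneOn_of_deriv_nonneg (convex_Ici 0)
      (hcont.sub (continuousOn_id))
    · intro t ht
      rw [interior_Ici] at ht
      exact ((hderiv t ht).sub ((hasDerivAt_id t))).differentiableAt.differentiableWithinAt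
    · intro t ht
      rw [interior_Ici] at ht
      have := ((hderiv t ht).sub (hasDerivAt_id t)).deriv
      rw [this]
      linarith [hu' t ht]
  have h1 : ∀ t ≥ (0 : ℝ), t ≤ u t := by
    intro t ht
    have := hmono (Set.self_mem_Ici) ht ht
    change u 0 - 0 ≤ u t - t at this
    linarith
  refine ⟨h1, ?_⟩
  intro t ht
  have hut : t ≤ u t := h1 t ht.le
  have hnpos : (0 : ℝ) < n := Nat.cast_pos.mpr hn
  have key : F t = (u t) ^ (-(n : ℝ) / 2) := by
    rw [hrel t, ← Real.rpow_mul (hF t).le]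
    rw [show (-(2:ℝ) / (n:ℝ)) * (-(n:ℝ) / 2) = 1 by field_simp, Real.rpow_one]
  rw [key]
  exact Real.rpow_le_rpow_of_nonpos ht hut (by linarith : -(n:ℝ)/2 ≤ 0)
end

section
/- For every pair of sites i < j, every partition P of [n], the two-site generator B_{ij} = M_{ij} − E_{ij} of the colored eigenvector moment flow commutes with the P-conditional expectation operator E^P: B_{ij} E^P = E^P B_{ij} as operators on functions Λ^n → ℝ. -/
open Finset

noncomputable section
open scoped Classical

/-- `m_{ab}^{ij} x`: moves particles `a` and `b` from site `i` to site `j`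
when `x_a = x_b = i`, otherwise does nothing. -/
def moveMap {N n : ℕ} (i j : Fin N) (a b : Fin n) (x : Fin n → Fin N) : Fin n → Fin N :=
  fun c => if x a = i ∧ x b = i ∧ (c = a ∨ c = b) then j else x c

/-- `s_{ab}^{ij} x`: swaps particle `a` at site `i` with particle `b` at site `j`
when `x_a = i, x_b = j`, otherwise does nothing. -/
def swapMap {N n : ℕ} (i j : Fin N) (a b : Fin n) (x : Fin n → Fin N) : Fin n → Fin N :=
  fun c => if x a = i ∧ x b = j then (if c = a then j else if c = b then i else x c) else x c

/-- the move operator `M_{ij}` -/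
def moveOp {N n : ℕ} (i j : Fin N) (f : (Fin n → Fin N) → ℝ) (x : Fin n → Fin N) : ℝ :=
  ((pnum x j : ℝ) + 1) / ((pnum x i : ℝ) - 1) *
      ∑ a, ∑ b ∈ Finset.univ.erase a, (f (moveMap i j a b x) - f x)
    + ((pnum x i : ℝ) + 1) / ((pnum x j : ℝ) - 1) *
      ∑ a, ∑ b ∈ Finset.univ.erase a, (f (moveMap j i a b x) - f x)

/-- the exchange operator `E_{ij}` -/
def exchOp {N n : ℕ} (i j : Fin N) (f : (Fin n → Fin N) → ℝ) (x : Fin n → Fin N) : ℝ :=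
  2 * ∑ a, ∑ b ∈ Finset.univ.erase a, (f (swapMap i j a b x) - f x)

/-- the two-site generator `B_{ij} = M_{ij} − E_{ij}` -/
def genOp {N n : ℕ} (i j : Fin N) (f : (Fin n → Fin N) → ℝ) (x : Fin n → Fin N) : ℝ :=
  moveOp i j f x - exchOp i j f x

/-- `G(P)` for the partition (equivalence relation) `r` -/
def compatPerms {n : ℕ} (r : Fin n → Fin n → Prop) : Finset (Equiv.Perm (Fin n)) :=
  Finset.univ.filter fun σ => ∀ a, r (σ a) a

/-- the `P`-conditional expectation operator -/
def condExpP {N n : ℕ} (r : Fin n → Fin n → Prop)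
    (f : (Fin n → Fin N) → ℝ) (x : Fin n → Fin N) : ℝ :=
  ((compatPerms r).card : ℝ)⁻¹ * ∑ σ ∈ compatPerms r, f (x ∘ σ)


section aux
variable {N n : ℕ}

lemma pnum_comp (x : Fin n → Fin N) (σ : Equiv.Perm (Fin n)) (k : Fin N) :
    pnum (x ∘ σ) k = pnum x k := by
  unfold pnum
  exact Finset.card_equiv σ (by simp)

lemma moveMap_comp (i j : Fin N) (a b : Fin n) (x : Fin n → Fin N) (σ : Equiv.Perm (Fin n)) :
    moveMap i j a b (x ∘ σ) = (moveMap i j (σ a) (σ b) x) ∘ σ := by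
  funext c
  simp [moveMap, Function.comp_apply, EmbeddingLike.apply_eq_iff_eq]

lemma swapMap_comp (i j : Fin N) (a b : Fin n) (x : Fin n → Fin N) (σ : Equiv.Perm (Fin n)) :
    swapMap i j a b (x ∘ σ) = (swapMap i j (σ a) (σ b) x) ∘ σ := by
  funext c
  simp [swapMap, Function.comp_apply, EmbeddingLike.apply_eq_iff_eq]

lemma sum_pairs_comp (σ : Equiv.Perm (Fin n)) (F : Fin n → Fin n → ℝ) :
    ∑ a, ∑ b ∈ Finset.univ.erase a, F (σ a) (σ b)
      = ∑ a, ∑ b ∈ Finset.univ.erase a, F a b := by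
  rw [← Equiv.sum_comp σ (fun a => ∑ b ∈ Finset.univ.erase a, F a b)]
  refine Finset.sum_congr rfl fun a _ => ?_
  refine Finset.sum_equiv σ (fun b => ?_) (fun b _ => rfl)
  simp

lemma genOp_comp (i j : Fin N) (f : (Fin n → Fin N) → ℝ) (x : Fin n → Fin N)
    (σ : Equiv.Perm (Fin n)) :
    genOp i j f (x ∘ σ) = genOp i j (fun y => f (y ∘ σ)) x := by
  unfold genOp moveOp exchOp
  simp only [pnum_comp, moveMap_comp, swapMap_comp]
  rw [sum_pairs_comp σ (fun a b => f ((moveMap i j a b x) ∘ σ) - f (x ∘ σ)),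
      sum_pairs_comp σ (fun a b => f ((moveMap j i a b x) ∘ σ) - f (x ∘ σ)),
      sum_pairs_comp σ (fun a b => f ((swapMap i j a b x) ∘ σ) - f (x ∘ σ))]

lemma sum_pairs_sub_sum {α : Type*} (s : Finset α)
    (m : Fin n → Fin n → (Fin n → Fin N)) (g : α → (Fin n → Fin N) → ℝ) (x : Fin n → Fin N) :
    ∑ a, ∑ b ∈ Finset.univ.erase a, ((∑ σ ∈ s, g σ (m a b)) - ∑ σ ∈ s, g σ x)
      = ∑ σ ∈ s, ∑ a, ∑ b ∈ Finset.univ.erase a, (g σ (m a b) - g σ x) := by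
  have h1 : ∀ a : Fin n, ∑ b ∈ Finset.univ.erase a, ∑ σ ∈ s, (g σ (m a b) - g σ x)
      = ∑ σ ∈ s, ∑ b ∈ Finset.univ.erase a, (g σ (m a b) - g σ x) := fun a => Finset.sum_comm
  simp only [← Finset.sum_sub_distrib, h1]
  exact Finset.sum_comm

lemma genOp_sum (i j : Fin N) {α : Type*} (s : Finset α)
    (g : α → (Fin n → Fin N) → ℝ) (x : Fin n → Fin N) :
    genOp i j (fun y => ∑ σ ∈ s, g σ y) x = ∑ σ ∈ s, genOp i j (g σ) x := by
  unfold genOp moveOp exchOp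
  rw [sum_pairs_sub_sum s (fun a b => moveMap i j a b x) g x,
      sum_pairs_sub_sum s (fun a b => moveMap j i a b x) g x,
      sum_pairs_sub_sum s (fun a b => swapMap i j a b x) g x]
  simp only [Finset.mul_sum, ← Finset.sum_add_distrib, ← Finset.sum_sub_distrib]

lemma genOp_smul (i j : Fin N) (c : ℝ) (h : (Fin n → Fin N) → ℝ) (x : Fin n → Fin N) :
    genOp i j (fun y => c * h y) x = c * genOp i j h x := by
  unfold genOp moveOp exchOp
  simp only [← mul_sub, ← Finset.mul_sum]
  ring

end aux

/-- for every pair of sites `i < j` and every partition `P` of `[n]`, the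
two-site generator `B_{ij} = M_{ij} − E_{ij}` commutes with the `P`-conditional
expectation `E^P` as operators on functions `Λ^n → ℝ`. -/
theorem stmt_14 (N n : ℕ) (hn : Even n)
    (r : Fin n → Fin n → Prop) (hr : Equivalence r)
    (i j : Fin N) (hij : i < j) :
    ∀ (f : (Fin n → Fin N) → ℝ) (x : Fin n → Fin N), (∀ k, Even (pnum x k)) →
      genOp i j (condExpP r f) x = condExpP r (fun y => genOp i j f y) x := by
  intro f x _
  have hc : condExpP r f
      = fun y => ∑ σ ∈ compatPerms r, ((compatPerms r).card : ℝ)⁻¹ * f (y ∘ σ) :=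
    funext fun y => by rw [condExpP, Finset.mul_sum]
  rw [hc, genOp_sum, condExpP, Finset.mul_sum]
  refine Finset.sum_congr rfl fun σ _ => ?_
  exact (genOp_smul i j _ (fun y => f (y ∘ σ)) x).trans (by rw [genOp_comp])


end
end

section
/- Let P be a partition of [n] refining the position compatibility requirement, x ∈ Λ^n a configuration, and i, j sites such that x_a = i and x_b = j, and suppose there is a third label c ∉ {a,b} with x_c = i and both the partitions P_x and P_{s_{ab}^{ij}x} refine P (where a ∼_{P_x} c and c ∼_{P_{s x}} b). Then a ∼_P b, the transposition (a b) is P-compatible, s_{ab}^{ij}x = (a b)·x lies in the G(P)-orbit of x, and hence (E_{ij} E^P f)(x) = 0 for all f supported on the two-site subspace through x, where E_{ij} f(x) = 2 Σ_{a≠b}(f(s_{ab}^{ij}x) − f(x)) and E^P is the G(P)-averaging operator. -/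
open Finset

noncomputable section
open scoped Classical

/-- `y` lies in the two-site subspace through `x` determined by the sites `i, j`:
every particle either keeps its position or differs within `{i, j}`. -/
def twoSiteRel {N n : ℕ} (i j : Fin N) (x y : Fin n → Fin N) : Prop :=
  ∀ d, y d = x d ∨ (y d = i ∧ x d = j) ∨ (y d = j ∧ x d = i)

lemma swapMap_eq {N n : ℕ} (i j : Fin N) (a b : Fin n) (x : Fin n → Fin N)
    (hxa : x a = i) (hxb : x b = j) :
    swapMap i j a b x = x ∘ Equiv.swap a b := by
  funext d
  simp only [swapMap, Function.comp_apply]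
  rw [if_pos ⟨hxa, hxb⟩]
  by_cases hda : d = a
  · subst hda; simp [Equiv.swap_apply_left, hxb]
  · by_cases hdb : d = b
    · subst hdb; simp [hda, Equiv.swap_apply_right, hxa]
    · simp [hda, hdb, Equiv.swap_apply_of_ne_of_ne hda hdb]

lemma swap_compat {n : ℕ} (r : Fin n → Fin n → Prop) (hr : Equivalence r)
    (a b : Fin n) (hab : r a b) : ∀ d, r (Equiv.swap a b d) d := by
  intro d
  by_cases hda : d = a
  · subst hda; rw [Equiv.swap_apply_left]; exact hr.symm hab
  · by_cases hdb : d = b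
    · subst hdb; rw [Equiv.swap_apply_right]; exact hab
    · rw [Equiv.swap_apply_of_ne_of_ne hda hdb]; exact hr.refl d

lemma condExpP_swap {N n : ℕ} (r : Fin n → Fin n → Prop) (hr : Equivalence r)
    (a b : Fin n) (hab : r a b) (f : (Fin n → Fin N) → ℝ) (x : Fin n → Fin N) :
    condExpP r f (x ∘ Equiv.swap a b) = condExpP r f x := by
  unfold condExpP
  congr 1
  have hsw := swap_compat r hr a b hab
  have hmem : ∀ σ : Equiv.Perm (Fin n), σ ∈ compatPerms r ↔
      Equiv.swap a b * σ ∈ compatPerms r := by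
    intro σ
    simp only [compatPerms, mem_filter, mem_univ, true_and, Equiv.Perm.mul_apply]
    constructor
    · intro h d
      exact hr.trans (hsw (σ d)) (h d)
    · intro h d
      exact hr.trans (hr.symm (hsw (σ d))) (h d)
  refine Finset.sum_equiv (Equiv.mulLeft (Equiv.swap a b)) (fun σ => ?_) (fun σ _ => ?_)
  · simpa using hmem σ
  · rfl

/-- vanishing exchange: with a third particle `c ∉ {a,b}` at site `i` and
both position partitions `P_x`, `P_{s_{ab}^{ij} x}` refining `P`, we get `a ∼_P b`, the
transposition `(a b)` is `P`-compatible, `s_{ab}^{ij}x = (a b)·x` lies in the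
`G(P)`-orbit of `x`, and `(E_{ij} E^P f)(x) = 0` for all `f` supported on the two-site
subspace through `x`. -/
theorem stmt_19 (N n : ℕ) (r : Fin n → Fin n → Prop) (hr : Equivalence r)
    (x : Fin n → Fin N) (i j : Fin N) (a b c : Fin n)
    (hxa : x a = i) (hxb : x b = j)
    (hca : c ≠ a) (hcb : c ≠ b) (hxc : x c = i)
    (hPx : ∀ d e, x d = x e → r d e)
    (hPs : ∀ d e, swapMap i j a b x d = swapMap i j a b x e → r d e) :
    r a b
    ∧ (∀ d, r (Equiv.swap a b d) d)
    ∧ swapMap i j a b x = x ∘ (Equiv.swap a b)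
    ∧ (∀ f : (Fin n → Fin N) → ℝ, (∀ y, ¬ twoSiteRel i j x y → f y = 0) →
        exchOp i j (condExpP r f) x = 0) := by
  have hac : r a c := hPx a c (hxa.trans hxc.symm)
  have hseq : swapMap i j a b x = x ∘ Equiv.swap a b := swapMap_eq i j a b x hxa hxb
  have hcb' : r c b := by
    apply hPs c b
    rw [hseq]
    simp [Function.comp, Equiv.swap_apply_right, Equiv.swap_apply_of_ne_of_ne hca hcb,
      hxa, hxc]
  have hab : r a b := hr.trans hac hcb'
  refine ⟨hab, swap_compat r hr a b hab, hseq, ?_⟩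
  intro f _
  unfold exchOp
  rw [mul_eq_zero]
  right
  apply Finset.sum_eq_zero
  intro a' _
  apply Finset.sum_eq_zero
  intro b' _
  by_cases h : x a' = i ∧ x b' = j
  · have ha'b' : r a' b' :=
      hr.trans (hPx a' a (h.1.trans hxa.symm))
        (hr.trans hab (hPx b b' (hxb.trans h.2.symm)))
    rw [swapMap_eq i j a' b' x h.1 h.2, condExpP_swap r hr a' b' ha'b', sub_self]
  · have : swapMap i j a' b' x = x := by
      funext d
      simp [swapMap, if_neg h]
    rw [this, sub_self]

end
end
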